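/- arXiv:1906.11037 — 3 statements merged into one kernel-verified Lean document; each statement's English description precedes it below -/
import Mathlib

section
/- (Degree elevation identity.) Let p be a polynomial in n variables with p(x) = Σ_{|α|=k} b_α B^{(k)}_α(x) for all x ∈ ℝⁿ, where α ranges over multi-indices α ∈ ℕ^{n+1} with |α| = k. Define, for each multi-index β ∈ ℕ^{n+1} with |β| = k+1, b′_β = (1/(k+1)) Σ_{i=0}^{n} βᵢ b_{β−êᵢ} (where êᵢ is the i-th standard unit vector of ℕ^{n+1} and terms with βᵢ = 0 are omitted). Then p(x) = Σ_{|β|=k+1} b′_β B^{(k+1)}_β(x) for all x ∈ ℝⁿ; that is, b′ are the Bernstein coefficients of p of degree k+1 on Δ. -/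
/-!
With the barycentric coordinates `λ = (1 - ∑ xᵢ, x₁, …, xₙ)` one has `B^k_α = (k!/α!) λ^α` and
`∑ λᵢ = 1`. Multiplying `p` by `∑ λᵢ` and using `(k+1) λᵢ B^k_α = (αᵢ+1) B^{k+1}_{α+eᵢ}` expresses `p`
in degree `k+1`; collecting the terms with `α + eᵢ = β` gives the coefficient `b'_β`.
-/

open Finset

noncomputable section

/-- The standard simplex Δ in ℝⁿ. -/
def stdSimp (n : ℕ) : Set (Fin n → ℝ) :=
  {x | (∀ i, 0 ≤ x i) ∧ ∑ i, x i ≤ 1}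

/-- Multi-indices α ∈ ℕ^{n+1} with |α| = k. -/
def multIdx (n k : ℕ) : Finset (Fin (n+1) → ℕ) :=
  Finset.Nat.antidiagonalTuple (n+1) k

lemma multIdx_nonempty (n k : ℕ) : (multIdx n k).Nonempty :=
  ⟨fun i => if i = 0 then k else 0, by
    simp [multIdx, Finset.Nat.mem_antidiagonalTuple]⟩

/-- Bernstein basis polynomial of degree k on the standard simplex. -/
def bern (n k : ℕ) (α : Fin (n+1) → ℕ) (x : Fin n → ℝ) : ℝ :=
  ((k.factorial : ℝ) / ∏ i, ((α i).factorial : ℝ)) *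
    (∏ i : Fin n, x i ^ α i.succ) * (1 - ∑ i, x i) ^ α 0

/-- i-th standard unit multi-index. -/
def unitIdx (n : ℕ) (i : Fin (n+1)) : Fin (n+1) → ℕ :=
  fun j => if j = i then 1 else 0

/-- vertex multi-index k·eᵢ -/
def vertIdx (n k : ℕ) (i : Fin (n+1)) : Fin (n+1) → ℕ :=
  fun j => if j = i then k else 0

/-- second difference -/
def secondDiff (n : ℕ) (b : (Fin (n+1) → ℕ) → ℝ) (γ : Fin (n+1) → ℕ)
    (i j : Fin (n+1)) : ℝ :=
  b (γ + unitIdx n i + unitIdx n (j - 1)) + b (γ + unitIdx n (i - 1) + unitIdx n j)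
    - b (γ + unitIdx n (i - 1) + unitIdx n (j - 1)) - b (γ + unitIdx n i + unitIdx n j)

theorem unitIdx_eq_single (n : ℕ) (i : Fin (n+1)) : unitIdx n i = Pi.single i 1 := by
  funext j
  simp [unitIdx, Pi.single_apply]

theorem prod_add_single_one {ι M : Type*} [Fintype ι] [DecidableEq ι] [CommMonoid M]
    (g : ι → ℕ → M) (α : ι → ℕ) (i : ι) :
    ∏ j, g j ((α + Pi.single i 1 : ι → ℕ) j)
      = g i (α i + 1) * ∏ j ∈ univ.erase i, g j (α j) := by
  rw [← mul_prod_erase _ _ (mem_univ i)]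
  congr 1
  · simp
  · refine prod_congr rfl fun j hj => ?_
    simp [ne_of_mem_erase hj]

theorem prod_factorial_add_single_one {ι : Type*} [Fintype ι] [DecidableEq ι]
    (α : ι → ℕ) (i : ι) :
    ∏ j, (((α + Pi.single i 1 : ι → ℕ) j).factorial : ℝ)
      = (α i + 1) * ∏ j, ((α j).factorial : ℝ) := by
  rw [prod_add_single_one (fun _ m => (m.factorial : ℝ)), ← mul_prod_erase _ _ (mem_univ i),
    Nat.factorial_succ]
  push_cast
  ring

theorem prod_pow_add_single_one {ι M : Type*} [Fintype ι] [DecidableEq ι] [CommMonoid M]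
    (y : ι → M) (α : ι → ℕ) (i : ι) :
    ∏ j, y j ^ (α + Pi.single i 1 : ι → ℕ) j = y i * ∏ j, y j ^ α j := by
  rw [prod_add_single_one (fun j m => y j ^ m), ← mul_prod_erase _ _ (mem_univ i), pow_succ]
  ac_rfl

def baryCoord {n : ℕ} (x : Fin n → ℝ) : Fin (n+1) → ℝ :=
  Fin.cons (1 - ∑ i, x i) x

theorem sum_baryCoord {n : ℕ} (x : Fin n → ℝ) : ∑ i, baryCoord x i = 1 := by
  rw [baryCoord, Fin.sum_cons]
  ring

theorem bern_eq_prod_baryCoord (n k : ℕ) (α : Fin (n+1) → ℕ) (x : Fin n → ℝ) :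
    bern n k α x = (k.factorial / ∏ i, ((α i).factorial : ℝ)) * ∏ i, baryCoord x i ^ α i := by
  rw [bern, Fin.prod_univ_succ (fun i => baryCoord x i ^ α i)]
  simp only [baryCoord, Fin.cons_zero, Fin.cons_succ]
  ring

theorem baryCoord_mul_bern (n k : ℕ) (α : Fin (n+1) → ℕ) (i : Fin (n+1)) (x : Fin n → ℝ) :
    (k + 1) * (baryCoord x i * bern n k α x)
      = (α i + 1) * bern n (k+1) (α + Pi.single i 1) x := by
  rw [bern_eq_prod_baryCoord, bern_eq_prod_baryCoord, prod_factorial_add_single_one,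
    prod_pow_add_single_one, Nat.factorial_succ]
  push_cast
  field_simp

theorem sum_multIdx_succ_mul_eq_sum_multIdx (n k : ℕ) (i : Fin (n+1)) (f : (Fin (n+1) → ℕ) → ℝ) :
    ∑ β ∈ multIdx n (k+1), (β i : ℝ) * f β
      = ∑ α ∈ multIdx n k, ((α i : ℝ) + 1) * f (α + Pi.single i 1) := by
  symm
  refine sum_bij_ne_zero (fun α _ _ => α + Pi.single i 1) ?_ ?_ ?_ ?_
  · intro α hα _
    simp_all [multIdx, Nat.mem_antidiagonalTuple, sum_add_distrib]
  · intro α _ _ α' _ _ h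
    exact add_right_cancel h
  · intro β hβ hne
    have hβi : β i ≠ 0 := by rintro h; simp [h] at hne
    have hle : Pi.single i 1 ≤ β := fun j => by
      by_cases hj : j = i <;> simp [hj]; omega
    have hsplit := tsub_add_cancel_of_le hle
    refine ⟨β - Pi.single i 1, ?_, ?_, hsplit⟩
    · rw [multIdx, Nat.mem_antidiagonalTuple] at hβ ⊢
      rw [← hsplit] at hβ
      simpa [sum_add_distrib] using hβ
    · have hβi' : ((β - Pi.single i 1 : Fin (n+1) → ℕ) i : ℝ) + 1 = β i := by
        exact_mod_cast by simpa using congrFun hsplit i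
      rwa [hβi', hsplit]
  · intro α _ _
    simp

theorem sum_bern_eq_sum_bern_succ (n k : ℕ) (b : (Fin (n+1) → ℕ) → ℝ) (x : Fin n → ℝ) :
    ∑ α ∈ multIdx n k, b α * bern n k α x
      = ∑ β ∈ multIdx n (k+1),
          (1 / (k+1 : ℝ) * ∑ i, (β i : ℝ) * b (β - Pi.single i 1)) * bern n (k+1) β x := by
  calc ∑ α ∈ multIdx n k, b α * bern n k α x
      = 1 / (k+1 : ℝ) * ∑ i, ∑ α ∈ multIdx n k,
          (k + 1) * (baryCoord x i * (b α * bern n k α x)) := by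
        rw [sum_comm, mul_sum]
        refine sum_congr rfl fun α _ => ?_
        rw [← mul_sum, ← sum_mul, sum_baryCoord]
        field_simp
    _ = 1 / (k+1 : ℝ) * ∑ i, ∑ α ∈ multIdx n k,
          ((α i : ℝ) + 1) * (b (α + Pi.single i 1 - Pi.single i 1)
            * bern n (k+1) (α + Pi.single i 1) x) := by
        simp_rw [add_tsub_cancel_right, mul_left_comm _ (b _), baryCoord_mul_bern]
    _ = 1 / (k+1 : ℝ) * ∑ i, ∑ β ∈ multIdx n (k+1),
          (β i : ℝ) * (b (β - Pi.single i 1) * bern n (k+1) β x) := by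
        simp_rw [sum_multIdx_succ_mul_eq_sum_multIdx]
    _ = _ := by
        rw [sum_comm, mul_sum]
        refine sum_congr rfl fun β _ => ?_
        simp_rw [mul_assoc, sum_mul, mul_assoc]

theorem stmt4_general (n k : ℕ)
    (p : (Fin n → ℝ) → ℝ) (b : (Fin (n+1) → ℕ) → ℝ)
    (hrep : ∀ x, p x = ∑ α ∈ multIdx n k, b α * bern n k α x)
    (b' : (Fin (n+1) → ℕ) → ℝ)
    (hb' : ∀ β ∈ multIdx n (k+1),
      b' β = (1 / (k+1 : ℝ)) * ∑ i : Fin (n+1), (β i : ℝ) * b (β - unitIdx n i)) :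
    ∀ x, p x = ∑ β ∈ multIdx n (k+1), b' β * bern n (k+1) β x := by
  intro x
  rw [hrep, sum_bern_eq_sum_bern_succ]
  refine sum_congr rfl fun β hβ => ?_
  simp_rw [hb' β hβ, unitIdx_eq_single]

/-- degree elevation identity. -/
theorem stmt4 (n k : ℕ) (hn : 1 ≤ n)
    (p : (Fin n → ℝ) → ℝ) (b : (Fin (n+1) → ℕ) → ℝ)
    (hrep : ∀ x, p x = ∑ α ∈ multIdx n k, b α * bern n k α x)
    (b' : (Fin (n+1) → ℕ) → ℝ)
    (hb' : ∀ β ∈ multIdx n (k+1),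
      b' β = (1 / (k+1 : ℝ)) * ∑ i : Fin (n+1), (β i : ℝ) * b (β - unitIdx n i)) :
    ∀ x, p x = ∑ β ∈ multIdx n (k+1), b' β * bern n (k+1) β x :=
  stmt4_general n k p b hrep b' hb'
end
end

section
/- (Monotonicity of the rational enclosure bound under degree elevation.) Let (b_α)_{|α|=k} and (c_α)_{|α|=k} be real coefficients indexed by multi-indices α ∈ ℕ^{n+1} with |α| = k, with c_α > 0 for all α. Define the degree-elevated coefficients b′_β = (1/(k+1)) Σ_{i=0}^{n} βᵢ b_{β−êᵢ} and c′_β = (1/(k+1)) Σ_{i=0}^{n} βᵢ c_{β−êᵢ} for |β| = k+1. Then c′_β > 0 for all β, and min_{|β|=k+1} b′_β/c′_β ≥ min_{|α|=k} b_α/c_α and max_{|β|=k+1} b′_β/c′_β ≤ max_{|α|=k} b_α/c_α; i.e., the rational enclosure interval of degree k+1 is contained in that of degree k. -/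
/-!
Up to the common factor `1 / (k + 1)`, which cancels in the ratio, `b'_β / c'_β` is the mediant
`(∑ βᵢ b_{β-eᵢ}) / (∑ βᵢ c_{β-eᵢ})` of the ratios `b_{β-eᵢ} / c_{β-eᵢ}` with the nonnegative
weights `βᵢ c_{β-eᵢ}`; every index `β - eᵢ` with `βᵢ ≠ 0` has degree `k`, so the mediant lies
between the least and the largest ratio of degree `k`.
-/

open Finset

noncomputable section

theorem le_sum_mul_div_sum_mul {ι : Type*} {s : Finset ι} {w b c : ι → ℝ} {m : ℝ}
    (hw : ∀ i ∈ s, 0 ≤ w i) (hc : 0 < ∑ i ∈ s, w i * c i)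
    (h : ∀ i ∈ s, w i ≠ 0 → m * c i ≤ b i) :
    m ≤ (∑ i ∈ s, w i * b i) / ∑ i ∈ s, w i * c i := by
  rw [le_div_iff₀ hc, mul_sum]
  refine sum_le_sum fun i hi => ?_
  by_cases hwi : w i = 0
  · simp [hwi]
  · calc m * (w i * c i) = w i * (m * c i) := by ring
      _ ≤ w i * b i := mul_le_mul_of_nonneg_left (h i hi hwi) (hw i hi)

theorem sum_mul_div_sum_mul_le {ι : Type*} {s : Finset ι} {w b c : ι → ℝ} {M : ℝ}
    (hw : ∀ i ∈ s, 0 ≤ w i) (hc : 0 < ∑ i ∈ s, w i * c i)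
    (h : ∀ i ∈ s, w i ≠ 0 → b i ≤ M * c i) :
    (∑ i ∈ s, w i * b i) / ∑ i ∈ s, w i * c i ≤ M := by
  have h_neg := le_sum_mul_div_sum_mul (b := -b) (m := -M) hw hc
    fun i hi hwi => by simpa only [Pi.neg_apply, neg_mul, neg_le_neg_iff] using h i hi hwi
  simpa only [Pi.neg_apply, mul_neg, sum_neg_distrib, neg_div, neg_le_neg_iff] using h_neg

theorem sub_unitIdx_mem_multIdx {n k : ℕ} {β : Fin (n+1) → ℕ} (hβ : β ∈ multIdx n (k+1))
    {i : Fin (n+1)} (hi : β i ≠ 0) : β - unitIdx n i ∈ multIdx n k := by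
  simp only [multIdx, Finset.Nat.mem_antidiagonalTuple] at hβ ⊢
  rw [← add_sum_erase _ _ (mem_univ i)] at hβ ⊢
  have h_erase : ∑ j ∈ univ.erase i, (β - unitIdx n i) j = ∑ j ∈ univ.erase i, β j :=
    sum_congr rfl fun j hj => by simp [unitIdx, ne_of_mem_erase hj]
  have h_at : (β - unitIdx n i) i = β i - 1 := by simp [unitIdx]
  omega

theorem exists_ne_zero_of_mem_multIdx_succ {n k : ℕ} {β : Fin (n+1) → ℕ}
    (hβ : β ∈ multIdx n (k+1)) : ∃ i, β i ≠ 0 := by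
  by_contra! h
  simp [multIdx, Finset.Nat.mem_antidiagonalTuple, h] at hβ

/-- Degree elevation of a coefficient family, without the normalising factor `1 / (k + 1)`. -/
def elevSum (n : ℕ) (f : (Fin (n+1) → ℕ) → ℝ) (β : Fin (n+1) → ℕ) : ℝ :=
  ∑ i, (β i : ℝ) * f (β - unitIdx n i)

section Elevation

variable {n k : ℕ} {b c : (Fin (n+1) → ℕ) → ℝ} {β : Fin (n+1) → ℕ}

theorem elevSum_pos (hc : ∀ α ∈ multIdx n k, 0 < c α) (hβ : β ∈ multIdx n (k+1)) :
    0 < elevSum n c β := by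
  obtain ⟨i, hi⟩ := exists_ne_zero_of_mem_multIdx_succ hβ
  refine sum_pos' (fun j _ => ?_) ⟨i, mem_univ i, ?_⟩
  · by_cases hj : β j = 0
    · simp [hj]
    · exact mul_nonneg (Nat.cast_nonneg _) (hc _ (sub_unitIdx_mem_multIdx hβ hj)).le
  · exact mul_pos (by exact_mod_cast Nat.pos_of_ne_zero hi) (hc _ (sub_unitIdx_mem_multIdx hβ hi))

theorem le_elevSum_div_elevSum {m : ℝ} (hc : ∀ α ∈ multIdx n k, 0 < c α)
    (hm : ∀ α ∈ multIdx n k, m ≤ b α / c α) (hβ : β ∈ multIdx n (k+1)) :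
    m ≤ elevSum n b β / elevSum n c β :=
  le_sum_mul_div_sum_mul (fun _ _ => Nat.cast_nonneg _) (elevSum_pos hc hβ) fun i _ hi => by
    have hα := sub_unitIdx_mem_multIdx hβ (by exact_mod_cast hi)
    exact (le_div_iff₀ (hc _ hα)).mp (hm _ hα)

theorem elevSum_div_elevSum_le {M : ℝ} (hc : ∀ α ∈ multIdx n k, 0 < c α)
    (hM : ∀ α ∈ multIdx n k, b α / c α ≤ M) (hβ : β ∈ multIdx n (k+1)) :
    elevSum n b β / elevSum n c β ≤ M :=
  sum_mul_div_sum_mul_le (fun _ _ => Nat.cast_nonneg _) (elevSum_pos hc hβ) fun i _ hi => by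
    have hα := sub_unitIdx_mem_multIdx hβ (by exact_mod_cast hi)
    exact (div_le_iff₀ (hc _ hα)).mp (hM _ hα)

end Elevation

theorem stmt9_general (n k : ℕ)
    (b c : (Fin (n+1) → ℕ) → ℝ)
    (hc : ∀ α ∈ multIdx n k, 0 < c α)
    (b' c' : (Fin (n+1) → ℕ) → ℝ)
    (hb' : ∀ β ∈ multIdx n (k+1),
      b' β = (1 / (k+1 : ℝ)) * ∑ i : Fin (n+1), (β i : ℝ) * b (β - unitIdx n i))
    (hc' : ∀ β ∈ multIdx n (k+1),
      c' β = (1 / (k+1 : ℝ)) * ∑ i : Fin (n+1), (β i : ℝ) * c (β - unitIdx n i)) :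
    (∀ β ∈ multIdx n (k+1), 0 < c' β) ∧
    (multIdx n k).inf' (multIdx_nonempty n k) (fun α => b α / c α) ≤
      (multIdx n (k+1)).inf' (multIdx_nonempty n (k+1)) (fun β => b' β / c' β) ∧
    (multIdx n (k+1)).sup' (multIdx_nonempty n (k+1)) (fun β => b' β / c' β) ≤
      (multIdx n k).sup' (multIdx_nonempty n k) (fun α => b α / c α) := by
  have h_factor : (0 : ℝ) < 1 / (k+1 : ℝ) := by positivity
  have h_ratio : ∀ β ∈ multIdx n (k+1), b' β / c' β = elevSum n b β / elevSum n c β :=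
    fun β hβ => by rw [hb' β hβ, hc' β hβ, mul_div_mul_left _ _ h_factor.ne', elevSum, elevSum]
  refine ⟨fun β hβ => ?_, le_inf'_iff _ _ |>.mpr fun β hβ => ?_,
    sup'_le_iff _ _ |>.mpr fun β hβ => ?_⟩
  · rw [hc' β hβ]
    exact mul_pos h_factor (elevSum_pos hc hβ)
  · rw [h_ratio β hβ]
    exact le_elevSum_div_elevSum hc (fun α hα => inf'_le _ hα) hβ
  · rw [h_ratio β hβ]
    exact elevSum_div_elevSum_le hc (fun α hα => le_sup' (fun α => b α / c α) hα) hβ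

/-- monotonicity of the rational enclosure bound under degree
elevation. -/
theorem stmt9 (n k : ℕ) (hn : 1 ≤ n)
    (b c : (Fin (n+1) → ℕ) → ℝ)
    (hc : ∀ α ∈ multIdx n k, 0 < c α)
    (b' c' : (Fin (n+1) → ℕ) → ℝ)
    (hb' : ∀ β ∈ multIdx n (k+1),
      b' β = (1 / (k+1 : ℝ)) * ∑ i : Fin (n+1), (β i : ℝ) * b (β - unitIdx n i))
    (hc' : ∀ β ∈ multIdx n (k+1),
      c' β = (1 / (k+1 : ℝ)) * ∑ i : Fin (n+1), (β i : ℝ) * c (β - unitIdx n i)) :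
    (∀ β ∈ multIdx n (k+1), 0 < c' β) ∧
    (multIdx n k).inf' (multIdx_nonempty n k) (fun α => b α / c α) ≤
      (multIdx n (k+1)).inf' (multIdx_nonempty n (k+1)) (fun β => b' β / c' β) ∧
    (multIdx n (k+1)).sup' (multIdx_nonempty n (k+1)) (fun β => b' β / c' β) ≤
      (multIdx n k).sup' (multIdx_nonempty n k) (fun α => b α / c α) :=
  stmt9_general n k b c hc b' c' hb' hc'
end
end

section
/- (Existence of a positive Bernstein degree.) Let p and q be polynomials in n variables of degree l, with q(x) > 0 for all x ∈ Δ and b_α(q,k,Δ) > 0 for all k ≥ l and all |α| = k. Let f = p/q and suppose f(x) > 0 for all x ∈ Δ. Then there exists k ≥ l such that min_{|α|=k} b_α(f,k,Δ) > 0, i.e. all rational Bernstein coefficients of f of degree k on Δ are positive. -/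
open Finset

noncomputable section

/-!
Homogenizing in barycentric coordinates, `s ↦ x = (s₁, …, sₙ) / ∑ s`, turns `(∑ s)ᵏ · B_α(x)` into
the monomial `k!/α! · sᵅ` and `(∑ s)ᵏ · xᵝ` into `s^(0,β) (∑ s)^(k-|β|)`. Comparing coefficients
gives `b_α = ∑_β a_β ∏ᵢ (αᵢ)_{βᵢ} / (k)_{|β|}` with falling factorials, i.e. `b_α = Φ(α/k, 1/k)` for
`Φ(x, t) = ∑_β a_β ∏ᵢ ∏_{j<βᵢ} (xᵢ - j t) / ∏_{j<|β|} (1 - j t)` (`bernCoeffFn`). This `Φ` is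
continuous near `t = 0`, and `Φ(x, 0) = p(x) = f(x) q(x) > 0` on the compact simplex, so `Φ > 0`
on `Δ × [0, ε)` and every `b_α` is positive as soon as `1/k < ε`.
-/

open MvPolynomial Filter Topology

lemma mem_multIdx {n k : ℕ} {α : Fin (n+1) → ℕ} : α ∈ multIdx n k ↔ ∑ j, α j = k :=
  Finset.Nat.mem_antidiagonalTuple

lemma isCompact_stdSimp (n : ℕ) : IsCompact (stdSimp n) := by
  have hclosed : IsClosed (stdSimp n) := by
    rw [stdSimp, Set.ofPred_and, Set.ofPred_forall]
    exact (isClosed_iInter fun i => isClosed_le continuous_const (continuous_apply i)).inter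
      (isClosed_le (continuous_finsetSum _ fun i _ => continuous_apply i) continuous_const)
  refine Metric.isCompact_of_isClosed_isBounded hclosed ((Metric.isBounded_Icc 0 1).subset ?_)
  exact fun x hx => ⟨hx.1, fun i => (single_le_sum (fun j _ => hx.1 j) (mem_univ i)).trans hx.2⟩

lemma tail_div_mem_stdSimp {n k : ℕ} {α : Fin (n+1) → ℕ} (hα : α ∈ multIdx n k) :
    (fun i => (α i.succ : ℝ) / k) ∈ stdSimp n := by
  refine ⟨fun i => by positivity, ?_⟩
  rw [← sum_div]
  refine div_le_one_of_le₀ ?_ k.cast_nonneg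
  have hsum := mem_multIdx.1 hα
  rw [Fin.sum_univ_succ] at hsum
  exact_mod_cast (by omega : ∑ i : Fin n, α i.succ ≤ k)

lemma Nat.multinomial_sub_mul_descFactorial {ι : Type*} [Fintype ι] {α h : ι → ℕ} (hle : h ≤ α) :
    multinomial univ (α - h) * (∑ j, α j).descFactorial (∑ j, h j) =
      multinomial univ α * ∏ j, (α j).descFactorial (h j) := by
  have hsum : ∑ j, (α - h) j = ∑ j, α j - ∑ j, h j := sum_tsub_distrib _ fun j _ => hle j
  refine Nat.eq_of_mul_eq_mul_left (prod_pos (s := univ) fun j _ => factorial_pos ((α - h) j)) ?_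
  calc (∏ j, ((α - h) j).factorial) *
        (multinomial univ (α - h) * (∑ j, α j).descFactorial (∑ j, h j))
      = (∑ j, α j).factorial := by
        rw [← mul_assoc, multinomial_spec, hsum,
          Nat.factorial_mul_descFactorial (sum_le_sum fun j _ => hle j)]
    _ = _ := by
        simp only [← multinomial_spec, Pi.sub_apply,
          ← prod_congr rfl fun j _ => Nat.factorial_mul_descFactorial (hle j), prod_mul_distrib]
        ring

section Homogenization

variable {K : Type*} [Field K] {n : ℕ}

/-- `(∑ X)ᵏ · p(X₁/∑X, …, Xₙ/∑X)`, written without division. -/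
def homogenize (k : ℕ) (p : MvPolynomial (Fin n) K) : MvPolynomial (Fin (n+1)) K :=
  ∑ β ∈ p.support, monomial (Finsupp.cons 0 β) (coeff β p) * (∑ j, X j) ^ (k - β.degree)

lemma eval_homogenize {k : ℕ} {p : MvPolynomial (Fin n) K} (hk : p.totalDegree ≤ k)
    {s : Fin (n+1) → K} (hs : ∑ j, s j ≠ 0) :
    eval s (homogenize k p) = (∑ j, s j) ^ k * eval (fun i => s i.succ / ∑ j, s j) p := by
  rw [homogenize, map_sum, eval_eq' _ p, mul_sum]
  refine sum_congr rfl fun β hβ => ?_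
  have hβk : β.degree ≤ k := (le_totalDegree hβ).trans hk
  simp only [map_mul, map_pow, map_sum, eval_X, eval_monomial,
    Finsupp.prod_fintype _ _ (fun _ => pow_zero _), Fin.prod_univ_succ, Finsupp.cons_zero,
    Finsupp.cons_succ, pow_zero, one_mul, div_pow, prod_div_distrib, prod_pow_eq_pow_sum, ← Finsupp.degree_eq_sum]
  rw [← Nat.add_sub_cancel' hβk, pow_add, Nat.add_sub_cancel_left]
  field_simp

lemma coeff_monomial_cons_mul_sum_X_pow {k : ℕ} {α : Fin (n+1) → ℕ} (hα : ∑ j, α j = k)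
    (β : Fin n →₀ ℕ) (a : K) :
    coeff (Finsupp.equivFunOnFinite.symm α)
        (monomial (Finsupp.cons 0 β) a * (∑ j, X j : MvPolynomial (Fin (n+1)) K) ^ (k - β.degree)) *
        k.descFactorial β.degree =
      a * ((Nat.multinomial univ α * ∏ i, (α i.succ).descFactorial (β i) : ℕ) : K) := by
  set h : Fin (n+1) → ℕ := Fin.cons 0 β
  have hdesc : ∏ i, (α i.succ).descFactorial (β i) = ∏ j, (α j).descFactorial (h j) := by
    simp [h, Fin.prod_univ_succ]
  have hsum : ∑ j, h j = β.degree := by simp [h, Fin.sum_univ_succ, Finsupp.degree_eq_sum]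
  rw [hdesc, coeff_monomial_mul', Finsupp.cons]
  by_cases hle : h ≤ α
  · have hsub : Finsupp.equivFunOnFinite.symm α - Finsupp.equivFunOnFinite.symm h =
        Finsupp.equivFunOnFinite.symm (α - h) := by ext; simp
    rw [if_pos (by simpa [Finsupp.le_def, Pi.le_def] using hle), mul_assoc, hsub,
      coeff_sum_X_pow_of_fintype, if_pos, Finsupp.multinomial_eq_of_support_subset (subset_univ _)]
    · rw [Finsupp.coe_equivFunOnFinite_symm, ← hα, ← hsum, ← Nat.cast_mul,
        Nat.multinomial_sub_mul_descFactorial hle]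
    · rw [Finsupp.sum_fintype _ _ (fun _ => rfl)]
      simp only [Finsupp.coe_equivFunOnFinite_symm, Pi.sub_apply]
      rw [sum_tsub_distrib _ fun j _ => hle j, hα, hsum]
  · rw [if_neg (by simpa [Finsupp.le_def, Pi.le_def] using hle), zero_mul]
    obtain ⟨j, hj⟩ : ∃ j, α j < h j := by simpa [Pi.le_def] using hle
    rw [prod_eq_zero (mem_univ j) (Nat.descFactorial_eq_zero_iff_lt.2 hj), mul_zero, Nat.cast_zero,
      mul_zero]

end Homogenization

section BernsteinCoefficients

variable {n k : ℕ}

lemma Nat.cast_multinomial_univ {ι : Type*} [Fintype ι] (α : ι → ℕ) :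
    (Nat.multinomial univ α : ℝ) = (∑ j, α j).factorial / ∏ j, ((α j).factorial : ℝ) := by
  rw [eq_div_iff (by positivity), mul_comm]
  exact_mod_cast Nat.multinomial_spec univ α

lemma sum_pow_mul_bern {α : Fin (n+1) → ℕ} (hα : ∑ j, α j = k) {s : Fin (n+1) → ℝ}
    (hs : ∑ j, s j ≠ 0) :
    (∑ j, s j) ^ k * bern n k α (fun i => s i.succ / ∑ j, s j) =
      Nat.multinomial univ α * ∏ j, s j ^ α j := by
  have hfirst : 1 - ∑ i : Fin n, s i.succ / ∑ j, s j = s 0 / ∑ j, s j := by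
    rw [← sum_div, eq_div_iff hs, sub_mul, one_mul, div_mul_cancel₀ _ hs,
      Fin.sum_univ_succ (f := s)]
    ring
  rw [bern, hfirst, Nat.cast_multinomial_univ, hα, Fin.prod_univ_succ (fun j => s j ^ α j)]
  simp only [div_pow, prod_div_distrib, prod_pow_eq_pow_sum]
  rw [← hα, Fin.sum_univ_succ (f := α)]
  field_simp
  ring

lemma homogenize_eq_sum_monomial {p : MvPolynomial (Fin n) ℝ} (hk : p.totalDegree ≤ k)
    {b : (Fin (n+1) → ℕ) → ℝ} (hrep : ∀ x, eval x p = ∑ α ∈ multIdx n k, b α * bern n k α x) :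
    homogenize k p = ∑ α ∈ multIdx n k,
      monomial (Finsupp.equivFunOnFinite.symm α) (b α * Nat.multinomial univ α) := by
  refine funext_set (fun _ => Set.Ioi 0) (fun _ => Set.Ioi_infinite 0) fun s hs => ?_
  have hsum : ∑ j, s j ≠ 0 := (sum_pos (fun j _ => hs j trivial) univ_nonempty).ne'
  rw [eval_homogenize hk hsum, hrep, mul_sum, map_sum]
  refine sum_congr rfl fun α hα => ?_
  rw [eval_monomial, Finsupp.prod_fintype _ _ (fun _ => pow_zero _), mul_left_comm,
    sum_pow_mul_bern (mem_multIdx.1 hα) hsum, mul_assoc]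
  rfl

lemma bernstein_coeff_eq_sum_descFactorial {p : MvPolynomial (Fin n) ℝ} (hk : p.totalDegree ≤ k)
    {b : (Fin (n+1) → ℕ) → ℝ} (hrep : ∀ x, eval x p = ∑ α ∈ multIdx n k, b α * bern n k α x)
    {α : Fin (n+1) → ℕ} (hα : α ∈ multIdx n k) :
    b α = ∑ β ∈ p.support,
      coeff β p * (∏ i, ((α i.succ).descFactorial (β i) : ℝ)) / k.descFactorial β.degree := by
  have hcoeff :=
    congrArg (coeff (Finsupp.equivFunOnFinite.symm α)) (homogenize_eq_sum_monomial hk hrep)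
  rw [coeff_sum, sum_eq_single α (fun α' _ hne => by simp [coeff_monomial, hne])
    (fun h => (h hα).elim), coeff_monomial, if_pos rfl, homogenize, coeff_sum] at hcoeff
  have hM : (Nat.multinomial univ α : ℝ) ≠ 0 := Nat.cast_ne_zero.2 (Nat.multinomial_pos _ _).ne'
  rw [← mul_div_cancel_right₀ (b α) hM, ← hcoeff, sum_div]
  refine sum_congr rfl fun β hβ => ?_
  have hdesc : (k.descFactorial β.degree : ℝ) ≠ 0 := Nat.cast_ne_zero.2
    (Nat.descFactorial_eq_zero_iff_lt.not.2 (not_lt.2 ((le_totalDegree hβ).trans hk)))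
  rw [div_eq_div_iff hM hdesc, coeff_monomial_cons_mul_sum_X_pow (mem_multIdx.1 hα)]
  push_cast
  ring

end BernsteinCoefficients

section Limit

variable {n : ℕ}

def bernCoeffFn (p : MvPolynomial (Fin n) ℝ) (x : Fin n → ℝ) (t : ℝ) : ℝ :=
  ∑ β ∈ p.support,
    coeff β p * (∏ i, ∏ j ∈ range (β i), (x i - j * t)) / ∏ j ∈ range β.degree, (1 - j * t)

lemma bernCoeffFn_zero (p : MvPolynomial (Fin n) ℝ) (x : Fin n → ℝ) :
    bernCoeffFn p x 0 = eval x p := by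
  simp [bernCoeffFn, eval_eq']

lemma continuousAt_bernCoeffFn (p : MvPolynomial (Fin n) ℝ) (x : Fin n → ℝ) :
    ContinuousAt (fun z : ℝ × (Fin n → ℝ) => bernCoeffFn p z.2 z.1) (0, x) := by
  unfold bernCoeffFn
  fun_prop (disch := simp)

lemma Nat.cast_descFactorial_div_pow (m r k : ℕ) :
    (m.descFactorial r : ℝ) / k ^ r = ∏ j ∈ range r, ((m : ℝ) / k - j * (1 / k)) := by
  rw [← descPochhammer_eval_eq_descFactorial, descPochhammer_eval_eq_prod_range, ← card_range r,
    ← prod_const, card_range, ← prod_div_distrib]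
  simp only [sub_div, mul_one_div]

lemma bernstein_coeff_eq_bernCoeffFn {k : ℕ} {p : MvPolynomial (Fin n) ℝ}
    (hk : p.totalDegree ≤ k) (hk0 : 0 < k) {b : (Fin (n+1) → ℕ) → ℝ}
    (hrep : ∀ x, eval x p = ∑ α ∈ multIdx n k, b α * bern n k α x)
    {α : Fin (n+1) → ℕ} (hα : α ∈ multIdx n k) :
    b α = bernCoeffFn p (fun i => α i.succ / k) (1 / k) := by
  rw [bernstein_coeff_eq_sum_descFactorial hk hrep hα, bernCoeffFn]
  refine sum_congr rfl fun β _ => ?_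
  have hnum : ∏ i, ∏ j ∈ range (β i), ((α i.succ : ℝ) / k - j * (1 / k)) =
      (∏ i, ((α i.succ).descFactorial (β i) : ℝ)) / k ^ β.degree := by
    simp only [← Nat.cast_descFactorial_div_pow, prod_div_distrib, prod_pow_eq_pow_sum,
      Finsupp.degree_eq_sum]
  have hden : ∏ j ∈ range β.degree, (1 - j * (1 / k : ℝ)) =
      k.descFactorial β.degree / k ^ β.degree := by
    rw [Nat.cast_descFactorial_div_pow, div_self (Nat.cast_ne_zero.2 hk0.ne')]
  rw [hnum, hden]
  have : (k : ℝ) ^ β.degree ≠ 0 := pow_ne_zero _ (Nat.cast_ne_zero.2 hk0.ne')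
  field_simp

end Limit

theorem stmt14_general (n l : ℕ)
    (p q : MvPolynomial (Fin n) ℝ)
    (hdegp : p.totalDegree = l)
    (b c : (k : ℕ) → (Fin (n+1) → ℕ) → ℝ)
    (hrepp : ∀ k, l ≤ k →
      ∀ x, MvPolynomial.eval x p = ∑ α ∈ multIdx n k, b k α * bern n k α x)
    (hqpos : ∀ x ∈ stdSimp n, 0 < MvPolynomial.eval x q)
    (hc : ∀ k, l ≤ k → ∀ α ∈ multIdx n k, 0 < c k α)
    (hfpos : ∀ x ∈ stdSimp n, 0 < MvPolynomial.eval x p / MvPolynomial.eval x q) :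
    ∃ k, l ≤ k ∧ ∀ α ∈ multIdx n k, 0 < b k α / c k α := by
  have hppos : ∀ x ∈ stdSimp n, 0 < eval x p := fun x hx =>
    (div_pos_iff_of_pos_right (hqpos x hx)).1 (hfpos x hx)
  have hnear : ∀ᶠ t in 𝓝 0, ∀ x ∈ stdSimp n, 0 < bernCoeffFn p x t :=
    (isCompact_stdSimp n).eventually_forall_of_forall_eventually fun x hx =>
      (continuousAt_bernCoeffFn p x).eventually
        (lt_mem_nhds (by simpa only [bernCoeffFn_zero] using hppos x hx))
  obtain ⟨k, hkl, hk0, hpos⟩ := ((eventually_ge_atTop l).and ((eventually_gt_atTop 0).and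
    (tendsto_one_div_atTop_nhds_zero_nat.eventually hnear))).exists
  refine ⟨k, hkl, fun α hα => div_pos ?_ (hc k hkl α hα)⟩
  rw [bernstein_coeff_eq_bernCoeffFn (hdegp ▸ hkl) hk0 (hrepp k hkl) hα]
  exact hpos _ (tail_div_mem_stdSimp hα)

/-- existence of a positive Bernstein degree for a positive
rational function. -/
theorem stmt14 (n l : ℕ) (hn : 1 ≤ n)
    (p q : MvPolynomial (Fin n) ℝ)
    (hdegp : p.totalDegree = l) (hdegq : q.totalDegree = l)
    (b c : (k : ℕ) → (Fin (n+1) → ℕ) → ℝ)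
    (hrepp : ∀ k, l ≤ k →
      ∀ x, MvPolynomial.eval x p = ∑ α ∈ multIdx n k, b k α * bern n k α x)
    (hrepq : ∀ k, l ≤ k →
      ∀ x, MvPolynomial.eval x q = ∑ α ∈ multIdx n k, c k α * bern n k α x)
    (hqpos : ∀ x ∈ stdSimp n, 0 < MvPolynomial.eval x q)
    (hc : ∀ k, l ≤ k → ∀ α ∈ multIdx n k, 0 < c k α)
    (hfpos : ∀ x ∈ stdSimp n, 0 < MvPolynomial.eval x p / MvPolynomial.eval x q) :
    ∃ k, l ≤ k ∧ ∀ α ∈ multIdx n k, 0 < b k α / c k α :=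
  stmt14_general n l p q hdegp b c hrepp hqpos hc hfpos
end
end
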